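/- Let γ : ℝ → ℝ² be a smooth unit-speed self-shrinking curve. Then 2H′(t) = H(t)·⟨γ(t), γ′(t)⟩ for all t, and consequently the function t ↦ H(t)² · e^{−|γ(t)|²/2} is constant on ℝ. -/

import Mathlib

/-! Along a self-shrinker `H = ⟨γ, n⟩ / 2`. Since `γ″ = −H n`, the normal turns as `n′ = H γ′`,
so `2H′ = ⟨γ′, n⟩ + ⟨γ, n′⟩ = H ⟨γ, γ′⟩`. As `(|γ|² / 2)′ = ⟨γ, γ′⟩`, the logarithmic
derivatives of `H²` and of `e^{|γ|²/2}` agree, whence `H² e^{−|γ|²/2}` is constant. -/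

noncomputable section
open Real MeasureTheory
open scoped RealInnerProductSpace

abbrev E2 := EuclideanSpace ℝ (Fin 2)

/-- The unit normal of a unit-speed plane curve: `γ′` rotated by `−π/2`. -/
def normal (γ : ℝ → E2) (t : ℝ) : E2 := WithLp.toLp 2 ![deriv γ t 1, -(deriv γ t 0)]

/-- The curvature `H = −⟨γ″, n⟩` of a unit-speed plane curve. -/
def curv (γ : ℝ → E2) (t : ℝ) : ℝ := -⟪deriv (deriv γ) t, normal γ t⟫

theorem inner_deriv_eq_zero_of_norm_eq {F : Type*} [NormedAddCommGroup F] [InnerProductSpace ℝ F]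
    {f : ℝ → F} {c t : ℝ} (hf : DifferentiableAt ℝ f t) (hc : ∀ s, ‖f s‖ = c) :
    ⟪f t, deriv f t⟫ = 0 := by
  have hsq : HasDerivAt (‖f ·‖ ^ 2) (2 * ⟪f t, deriv f t⟫) t := hf.hasDerivAt.norm_sq
  simp only [hc] at hsq
  linarith [hsq.unique (hasDerivAt_const t (c ^ 2))]

theorem sq_mul_exp_neg_eq_of_hasDerivAt {f g g' : ℝ → ℝ}
    (hf : ∀ t, HasDerivAt f (f t * g' t / 2) t) (hg : ∀ t, HasDerivAt g (g' t) t) (t s : ℝ) :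
    f t ^ 2 * exp (-g t) = f s ^ 2 * exp (-g s) := by
  have hF : ∀ t, HasDerivAt (fun u => f u ^ 2 * exp (-g u)) 0 t := fun t => by
    refine (((hf t).pow 2).mul (hg t).neg.exp).congr_deriv ?_
    simp only [Pi.pow_apply, Pi.neg_apply]
    ring
  exact is_const_of_deriv_eq_zero (fun t => (hF t).differentiableAt) (fun t => (hF t).deriv) t s

namespace E2

lemma inner_eq (v w : E2) : ⟪v, w⟫ = v 0 * w 0 + v 1 * w 1 := by
  simp only [PiLp.inner_apply, RCLike.inner_apply, conj_trivial, Fin.sum_univ_two]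
  ring

def rot : E2 →L[ℝ] E2 := LinearMap.toContinuousLinearMap
  { toFun := fun v => WithLp.toLp 2 ![v 1, -v 0]
    map_add' := fun v w => by ext i; fin_cases i <;> simp [add_comm]
    map_smul' := fun c v => by ext i; fin_cases i <;> simp }

@[simp] lemma rot_apply_zero (v : E2) : rot v 0 = v 1 := rfl

@[simp] lemma rot_apply_one (v : E2) : rot v 1 = -v 0 := rfl

lemma rot_rot (v : E2) : rot (rot v) = -v := by
  ext i; fin_cases i <;> simp

lemma inner_self_rot (v : E2) : ⟪v, rot v⟫ = 0 := by
  rw [inner_eq, rot_apply_zero, rot_apply_one]; ring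

lemma eq_inner_rot_smul_rot {u v : E2} (hu : ‖u‖ = 1) (huv : ⟪u, v⟫ = 0) :
    v = ⟪v, rot u⟫ • rot u := by
  have hu' : u 0 * u 0 + u 1 * u 1 = 1 := by
    rw [← inner_eq, real_inner_self_eq_norm_sq, hu, one_pow]
  rw [inner_eq] at huv
  ext i; fin_cases i <;>
    simp only [Fin.zero_eta, Fin.mk_one, inner_eq, rot_apply_zero, rot_apply_one, PiLp.smul_apply,
      smul_eq_mul]
  · linear_combination u 0 * huv - v 0 * hu'
  · linear_combination u 1 * huv - v 1 * hu'

end E2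

open E2

section UnitSpeed

variable {γ : ℝ → E2}

lemma normal_eq_rot (t : ℝ) : normal γ t = rot (deriv γ t) := rfl

lemma deriv_deriv_eq_neg_curv_smul_normal (hγ : Differentiable ℝ (deriv γ))
    (hunit : ∀ t, ‖deriv γ t‖ = 1) (t : ℝ) :
    deriv (deriv γ) t = -curv γ t • normal γ t := by
  rw [curv, neg_neg, normal_eq_rot]
  exact eq_inner_rot_smul_rot (hunit t) (inner_deriv_eq_zero_of_norm_eq (hγ t) hunit)

lemma hasDerivAt_normal (hγ : Differentiable ℝ (deriv γ)) (hunit : ∀ t, ‖deriv γ t‖ = 1)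
    (t : ℝ) : HasDerivAt (normal γ) (curv γ t • deriv γ t) t := by
  have h := rot.hasFDerivAt.comp_hasDerivAt t (hγ t).hasDerivAt
  rwa [deriv_deriv_eq_neg_curv_smul_normal hγ hunit, map_smul, normal_eq_rot, rot_rot,
    smul_neg, neg_smul, neg_neg] at h

lemma hasDerivAt_inner_normal (hγ : Differentiable ℝ γ) (hγ' : Differentiable ℝ (deriv γ))
    (hunit : ∀ t, ‖deriv γ t‖ = 1) (t : ℝ) :
    HasDerivAt (fun s => ⟪γ s, normal γ s⟫) (curv γ t * ⟪γ t, deriv γ t⟫) t := by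
  refine ((hγ t).hasDerivAt.inner ℝ (hasDerivAt_normal hγ' hunit t)).congr_deriv ?_
  rw [normal_eq_rot, inner_smul_right, inner_self_rot, add_zero]

end UnitSpeed

/-- On a smooth unit-speed self-shrinking curve, `2H′ = H⟨γ, γ′⟩`, and
consequently `H² e^{−|γ|²/2}` is constant. -/
theorem stmt16 (γ : ℝ → E2) (hγ : ContDiff ℝ (⊤ : ℕ∞) γ)
    (hunit : ∀ t, ‖deriv γ t‖ = 1)
    (hshrink : ∀ t, curv γ t = ⟪γ t, normal γ t⟫ / 2) :
    (∀ t : ℝ, 2 * deriv (curv γ) t = curv γ t * ⟪γ t, deriv γ t⟫) ∧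
    (∀ t s : ℝ,
      curv γ t ^ 2 * Real.exp (-‖γ t‖ ^ 2 / 2) = curv γ s ^ 2 * Real.exp (-‖γ s‖ ^ 2 / 2)) := by
  have hdiff : Differentiable ℝ γ := hγ.differentiable (by simp)
  have hdiff' : Differentiable ℝ (deriv γ) :=
    (contDiff_infty_iff_deriv.mp hγ).2.differentiable (by simp)
  have hcurv : ∀ t, HasDerivAt (curv γ) (curv γ t * ⟪γ t, deriv γ t⟫ / 2) t := fun t => by
    have h := (hasDerivAt_inner_normal hdiff hdiff' hunit t).div_const 2
    rwa [← funext hshrink] at h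
  have hnorm : ∀ t, HasDerivAt (fun s => ‖γ s‖ ^ 2 / 2) ⟪γ t, deriv γ t⟫ t := fun t => by
    simpa using (hdiff t).hasDerivAt.norm_sq.div_const 2
  refine ⟨fun t => by rw [(hcurv t).deriv]; ring, fun t s => ?_⟩
  simpa only [neg_div] using sq_mul_exp_neg_eq_of_hasDerivAt hcurv hnorm t s
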